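/- For every integer n ≥ 1, the value Li_n(ξ₆) − (2^{1−n} + (−1)^n)·Li_n(ξ₃) lies in ℚ·(2πi)^n, where ξ₆ = e^{2πi/6} and ξ₃ = e^{2πi/3}. -/

import Mathlib

noncomputable def Li (n : ℕ) (z : ℂ) : ℂ := ∑' k : ℕ, z ^ (k + 1) / ((k : ℂ) + 1) ^ n

noncomputable def xi3 : ℂ := Complex.exp (2 * Real.pi * Complex.I / 3)

noncomputable def xi6 : ℂ := Complex.exp (2 * Real.pi * Complex.I / 6)

open Complex Real

lemma norm_xi3 : ‖xi3‖ = 1 := by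
  rw [xi3, Complex.norm_exp]
  norm_num [Complex.div_re, Complex.mul_re, Complex.mul_im]

lemma norm_xi6 : ‖xi6‖ = 1 := by
  rw [xi6, Complex.norm_exp]
  norm_num [Complex.div_re, Complex.mul_re, Complex.mul_im]

lemma xi6_sq : xi6 ^ 2 = xi3 := by
  rw [xi6, xi3, sq, ← Complex.exp_add]
  congr 1; ring

lemma xi3_sq : xi3 ^ 2 = -xi6 := by
  rw [xi6, xi3, sq, ← Complex.exp_add,
    show 2 * (Real.pi:ℂ) * Complex.I / 3 + 2 * (Real.pi:ℂ) * Complex.I / 3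
      = 2 * (Real.pi:ℂ) * Complex.I / 6 + Real.pi * Complex.I by ring,
    Complex.exp_add, Complex.exp_pi_mul_I]
  ring

lemma norm_Li_term (n : ℕ) {z : ℂ} (hz : ‖z‖ = 1) (k : ℕ) :
    ‖z ^ (k + 1) / ((k : ℂ) + 1) ^ n‖ = 1 / ((k : ℝ) + 1) ^ n := by
  rw [norm_div, norm_pow, norm_pow, hz, one_pow,
    show ((k : ℂ) + 1) = ((k + 1 : ℕ) : ℂ) by push_cast; ring, Complex.norm_natCast]
  push_cast; ring

lemma Li_summable {n : ℕ} (hn : 2 ≤ n) {z : ℂ} (hz : ‖z‖ = 1) :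
    Summable (fun k : ℕ => z ^ (k + 1) / ((k : ℂ) + 1) ^ n) := by
  apply Summable.of_norm
  simp only [norm_Li_term n hz]
  have := (Real.summable_one_div_nat_pow (p := n)).mpr (by omega)
  have h2 := (summable_nat_add_iff 1).mpr this
  refine h2.congr fun k => ?_
  push_cast; ring


theorem stmt1 (n : ℕ) (hn : 1 ≤ n) :
    ∃ q : ℚ,
      Li n xi6 - ((2 : ℂ) ^ (1 - (n : ℤ)) + (-1 : ℂ) ^ n) * Li n xi3 =
        (q : ℂ) * (2 * Real.pi * Complex.I) ^ n := by
  rcases eq_or_lt_of_le hn with h1 | hn2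
  · -- n = 1
    have h1' : n = 1 := h1.symm
    subst h1'
    refine ⟨0, ?_⟩
    have hns : ¬ Summable (fun k : ℕ => xi6 ^ (k + 1) / ((k : ℂ) + 1) ^ 1) := by
      intro h
      have h2 : Summable (fun k : ℕ => ‖xi6 ^ (k + 1) / ((k : ℂ) + 1) ^ 1‖) :=
        summable_norm_iff.mpr h
      have h3 : Summable (fun k : ℕ => 1 / (((k + 1 : ℕ)) : ℝ)) := by
        refine h2.congr fun k => ?_
        rw [norm_Li_term 1 norm_xi6, pow_one]
        push_cast
        ring
      exact Real.not_summable_one_div_natCast ((summable_nat_add_iff 1).mp h3)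
    have hLi : Li 1 xi6 = 0 := tsum_eq_zero_of_not_summable hns
    rw [hLi]
    norm_num
  · have hn2 : 2 ≤ n := hn2
    have s6 := Li_summable hn2 norm_xi6
    have s3 := Li_summable hn2 norm_xi3
    have s3' : Summable (fun k : ℕ => (xi3 ^ 2) ^ (k + 1) / ((k : ℂ) + 1) ^ n) :=
      Li_summable hn2 (by rw [norm_pow, norm_xi3, one_pow])
    -- distribution relation
    have hdist : Li n xi6 + Li n (xi3 ^ 2) = (2:ℂ) ^ (1 - (n:ℤ)) * Li n xi3 := by
      have hsum : HasSum
          (fun k : ℕ => xi6 ^ (k + 1) / ((k : ℂ) + 1) ^ n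
            + (xi3 ^ 2) ^ (k + 1) / ((k : ℂ) + 1) ^ n)
          (Li n xi6 + Li n (xi3 ^ 2)) := s6.hasSum.add s3'.hasSum
      have hinj : Function.Injective (fun m : ℕ => 2 * m + 1) := by
        intro a b h
        simp only at h
        omega
      have hvanish : ∀ k ∉ Set.range (fun m : ℕ => 2 * m + 1),
          xi6 ^ (k + 1) / ((k : ℂ) + 1) ^ n + (xi3 ^ 2) ^ (k + 1) / ((k : ℂ) + 1) ^ n = 0 := by
        intro k hk
        have hke : Even k := by
          by_contra hodd
          rw [Nat.not_even_iff_odd] at hodd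
          obtain ⟨m, hm⟩ := hodd
          exact hk ⟨m, by simp only []; omega⟩
        have hodd : Odd (k + 1) := Even.add_one hke
        rw [xi3_sq, hodd.neg_pow]
        ring
      have key : ((fun k : ℕ => xi6 ^ (k + 1) / ((k : ℂ) + 1) ^ n
          + (xi3 ^ 2) ^ (k + 1) / ((k : ℂ) + 1) ^ n) ∘ (fun m : ℕ => 2 * m + 1))
          = fun m : ℕ => (2:ℂ) ^ (1 - (n:ℤ)) * (xi3 ^ (m + 1) / ((m : ℂ) + 1) ^ n) := by
        funext m
        simp only [Function.comp_apply]
        have heven : Even (2 * m + 1 + 1) := ⟨m + 1, by omega⟩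
        rw [xi3_sq, heven.neg_pow]
        have hx : xi6 ^ (2 * m + 1 + 1) = xi3 ^ (m + 1) := by
          rw [show 2 * m + 1 + 1 = 2 * (m + 1) by ring, pow_mul, xi6_sq]
        have hc : ((2 * m + 1 : ℕ) : ℂ) + 1 = 2 * ((m : ℂ) + 1) := by push_cast; ring
        rw [hx, hc, mul_pow, zpow_sub₀ (two_ne_zero), zpow_one, zpow_natCast]
        have hm1 : ((m : ℂ) + 1) ≠ 0 := by
          exact_mod_cast Nat.succ_ne_zero m
        have h2n : ((2:ℂ)) ^ n ≠ 0 := pow_ne_zero _ two_ne_zero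
        field_simp
        ring
      have hsum2 : HasSum
          ((fun k : ℕ => xi6 ^ (k + 1) / ((k : ℂ) + 1) ^ n
            + (xi3 ^ 2) ^ (k + 1) / ((k : ℂ) + 1) ^ n) ∘ (fun m : ℕ => 2 * m + 1))
          ((2:ℂ) ^ (1 - (n:ℤ)) * Li n xi3) := by
        rw [key]; exact s3.hasSum.mul_left _
      exact hsum.unique ((hinj.hasSum_iff hvanish).mp hsum2)
    -- Fourier / Bernoulli at x = 1/3
    have hx13 : (1/3 : ℝ) ∈ Set.Icc (0:ℝ) 1 := by constructor <;> norm_num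
    have hB := hasSum_one_div_nat_pow_mul_fourier (k := n) hn2 hx13
    have hf1 : ∀ m : ℕ, fourier (m : ℤ) (((1/3 : ℝ) : UnitAddCircle)) = xi3 ^ m := by
      intro m
      rw [fourier_coe_apply, xi3, ← Complex.exp_nat_mul]
      congr 1
      push_cast; ring
    have hf2 : ∀ m : ℕ, fourier (-(m : ℤ)) (((1/3 : ℝ) : UnitAddCircle)) = (xi3 ^ 2) ^ m := by
      intro m
      rw [fourier_coe_apply, xi3, ← pow_mul, ← Complex.exp_nat_mul,
        show 2 * (Real.pi:ℂ) * Complex.I * ((-(m:ℤ) : ℤ) : ℂ) * ((1/3:ℝ):ℂ) / ((1:ℝ):ℂ)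
          = ((2 * m : ℕ) : ℂ) * (2 * (Real.pi:ℂ) * Complex.I / 3)
            + ((-(m:ℤ) : ℤ) : ℂ) * (2 * (Real.pi:ℂ) * Complex.I) by push_cast; ring,
        Complex.exp_add, Complex.exp_int_mul_two_pi_mul_I, mul_one]
    simp only [hf1, hf2] at hB
    -- identify the Fourier sum with Li values
    set F : ℕ → ℂ := fun m => (1:ℂ) / (m:ℂ) ^ n * (xi3 ^ m + (-1:ℂ) ^ n * (xi3 ^ 2) ^ m) with hF
    have hshift : HasSum (fun m : ℕ => F (m + 1))
        (Li n xi3 + (-1:ℂ) ^ n * Li n (xi3 ^ 2)) := by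
      have h := s3.hasSum.add ((s3'.hasSum).mul_left ((-1:ℂ) ^ n))
      have heq : (fun k : ℕ => xi3 ^ (k+1) / ((k:ℂ)+1) ^ n
          + (-1:ℂ) ^ n * ((xi3 ^ 2) ^ (k+1) / ((k:ℂ)+1) ^ n))
          = fun m : ℕ => F (m + 1) := by
        funext m
        simp only [hF]
        push_cast
        ring
      rwa [heq] at h
    have hLsum : HasSum F (Li n xi3 + (-1:ℂ) ^ n * Li n (xi3 ^ 2)) := by
      have := (hasSum_nat_add_iff (f := F) 1).mp hshift
      simpa [hF, zero_pow (show n ≠ 0 by omega)] using this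
    have hfin : Li n xi3 + (-1:ℂ) ^ n * Li n (xi3 ^ 2)
        = -(2 * (Real.pi:ℂ) * Complex.I) ^ n / (n.factorial : ℂ) * (bernoulliFun n (1/3) : ℂ) :=
      hLsum.unique (by simpa [hF] using hB)
    -- bernoulli value is rational
    have hBval : ((bernoulliFun n (1/3:ℝ) : ℝ) : ℂ)
        = (((Polynomial.bernoulli n).eval (1/3:ℚ) : ℚ) : ℂ) := by
      have h : bernoulliFun n (1/3:ℝ) = (((Polynomial.bernoulli n).eval (1/3:ℚ) : ℚ) : ℝ) := by
        rw [bernoulliFun, show ((1:ℝ)/3) = algebraMap ℚ ℝ (1/3) by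
            simp [eq_ratCast], Polynomial.eval_map, Polynomial.eval₂_at_apply]
        simp [eq_ratCast]
      rw [h]
      push_cast
      ring
    rw [hBval] at hfin
    have e2 : (-1:ℂ) ^ n * (-1:ℂ) ^ n = 1 := by
      rw [← pow_add, ← two_mul, pow_mul]
      norm_num
    refine ⟨(-1:ℚ) ^ n * ((Polynomial.bernoulli n).eval (1/3:ℚ)) / (n.factorial : ℚ), ?_⟩
    have hfacne : (n.factorial : ℂ) ≠ 0 := by
      exact_mod_cast n.factorial_ne_zero
    push_cast
    linear_combination hdist - (-1:ℂ) ^ n * hfin + (Li n (xi3 ^ 2)) * e2
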